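/- Let m, n ≥ 1 and r > 2 be integers with gcd(s, r) = 1, and write e(θ) = cos(θ) + sin(θ)·i for the unit quaternion corresponding to the unit complex number of argument θ. Let G̃ be the subgroup of S³ × S³ generated by the three elements (e(π/(mr)), e(sπ/(nr))), (e(π/m), 1), and (1, e(π/n)) (this is the group denoted (C_{2mr}/C_{2m}, C_{2nr}/C_{2n})_s in Du Val's notation). Then the normalizer of G̃ in S³ × S³ is exactly {(g,f) : g ∈ O(2)*, f ∈ O(2)*, and g ∈ S¹ if and only if f ∈ S¹}. -/

import Mathlib

open Quaternion

noncomputable section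

/-- The group `S³` of unit quaternions. -/
abbrev S3 : Type := Metric.sphere (0 : Quaternion ℝ) 1

theorem norm_one_of {q : ℍ[ℝ]} (h : Quaternion.normSq q = 1) : ‖q‖ = 1 := by
  have h2 : ‖q‖ * ‖q‖ = 1 := by rw [← Quaternion.normSq_eq_norm_mul_self, h]
  rcases mul_self_eq_one_iff.mp h2 with h | h
  · exact h
  · nlinarith [norm_nonneg q]

/-- The unit quaternion `a + b·i + c·j + d·k`. -/
def mkS (a b c d : ℝ) (h : a ^ 2 + b ^ 2 + c ^ 2 + d ^ 2 = 1) : S3 :=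
  ⟨⟨a, b, c, d⟩, by
    apply mem_sphere_zero_iff_norm.mpr
    apply norm_one_of
    exact (Quaternion.normSq_def' _).trans h⟩

/-- The unit quaternion `cos θ + sin θ · i`. -/
def eS (θ : ℝ) : S3 :=
  mkS (Real.cos θ) (Real.sin θ) 0 0 (by
    have := Real.cos_sq_add_sin_sq θ
    nlinarith)

/-- The unit quaternion `i`. -/
def iS : S3 := mkS 0 1 0 0 (by norm_num)

/-- The unit quaternion `j`. -/
def jS : S3 := mkS 0 0 1 0 (by norm_num)

/-- The set `S¹` of unit quaternions of the form `a + b·i`. -/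
def circSet : Set S3 := {q : S3 | (q : ℍ[ℝ]).imJ = 0 ∧ (q : ℍ[ℝ]).imK = 0}

/-- The set `O(2)* = S¹ ∪ S¹·j`. -/
def O2Set : Set S3 := circSet ∪ (fun z => z * jS) '' circSet

/-! ### auxiliary lemmas -/

@[simp] lemma eS_re (θ : ℝ) : (eS θ : ℍ[ℝ]).re = Real.cos θ := rfl
@[simp] lemma eS_imI (θ : ℝ) : (eS θ : ℍ[ℝ]).imI = Real.sin θ := rfl
@[simp] lemma eS_imJ (θ : ℝ) : (eS θ : ℍ[ℝ]).imJ = 0 := rfl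
@[simp] lemma eS_imK (θ : ℝ) : (eS θ : ℍ[ℝ]).imK = 0 := rfl
@[simp] lemma jS_re : (jS : ℍ[ℝ]).re = 0 := rfl
@[simp] lemma jS_imI : (jS : ℍ[ℝ]).imI = 0 := rfl
@[simp] lemma jS_imJ : (jS : ℍ[ℝ]).imJ = 1 := rfl
@[simp] lemma jS_imK : (jS : ℍ[ℝ]).imK = 0 := rfl

lemma normSq_one (x : S3) : (x : ℍ[ℝ]).re ^ 2 + (x : ℍ[ℝ]).imI ^ 2
    + (x : ℍ[ℝ]).imJ ^ 2 + (x : ℍ[ℝ]).imK ^ 2 = 1 := by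
  have h1 : ‖(x:ℍ[ℝ])‖ = 1 := mem_sphere_zero_iff_norm.1 x.2
  have := Quaternion.normSq_def' (x : ℍ[ℝ])
  rw [Quaternion.normSq_eq_norm_mul_self, h1] at this
  linarith [this.symm]

lemma inv_coe (x : S3) : ((x⁻¹ : S3) : ℍ[ℝ]) = star (x:ℍ[ℝ]) := by
  rw [Metric.unitSphere.coe_inv]
  have h1 : ‖(x:ℍ[ℝ])‖ = 1 := mem_sphere_zero_iff_norm.1 x.2
  have : (x:ℍ[ℝ]) * star (x:ℍ[ℝ]) = 1 := by
    rw [Quaternion.self_mul_star]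
    norm_cast
    rw [Quaternion.normSq_eq_norm_mul_self, h1]; norm_num
  exact inv_eq_of_mul_eq_one_right this

lemma eS_mul (θ φ : ℝ) : eS θ * eS φ = eS (θ + φ) := by
  apply Subtype.ext
  rw [Metric.unitSphere.coe_mul]
  ext <;> simp [Real.cos_add, Real.sin_add] <;> ring

lemma eS_zero : eS 0 = 1 := by
  apply Subtype.ext
  rw [Metric.unitSphere.coe_one]
  ext <;> simp

lemma eS_inv (θ : ℝ) : (eS θ)⁻¹ = eS (-θ) := by
  rw [inv_eq_iff_mul_eq_one, eS_mul, add_neg_cancel, eS_zero]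

lemma eS_zpow (θ : ℝ) (u : ℤ) : eS θ ^ u = eS (u * θ) := by
  induction u using Int.induction_on with
  | zero => simpa using eS_zero.symm
  | succ k ih => rw [zpow_add_one, ih, eS_mul]; push_cast; ring_nf
  | pred k ih => rw [zpow_sub_one, ih, eS_inv, eS_mul]; push_cast; ring_nf

lemma eS_inj {θ φ : ℝ} (h : eS θ = eS φ) : ∃ k : ℤ, θ - φ = 2 * Real.pi * k := by
  have hc : Real.cos θ = Real.cos φ := by
    have := congrArg (fun x : S3 => (x : ℍ[ℝ]).re) h; simpa using this
  have hsin : Real.sin θ = Real.sin φ := by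
    have := congrArg (fun x : S3 => (x : ℍ[ℝ]).imI) h; simpa using this
  have : (θ : Real.Angle) = (φ : Real.Angle) := by
    apply Real.Angle.cos_sin_inj <;> simpa [Real.Angle.cos_coe, Real.Angle.sin_coe]
  rcases Real.Angle.angle_eq_iff_two_pi_dvd_sub.mp this with ⟨k, hk⟩
  exact ⟨k, hk⟩

@[simp] lemma eS_mem_circ (θ : ℝ) : eS θ ∈ circSet := ⟨rfl, rfl⟩

lemma circ_comm {g : S3} (hg : g ∈ circSet) (x : S3) (hx : x ∈ circSet) :
    g * x = x * g := by
  apply Subtype.ext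
  rw [Metric.unitSphere.coe_mul, Metric.unitSphere.coe_mul]
  ext <;> simp [hg.1, hg.2, hx.1, hx.2] <;> ring

lemma circ_conj {g : S3} (hg : g ∈ circSet) (θ : ℝ) : g * eS θ * g⁻¹ = eS θ := by
  rw [circ_comm hg (eS θ) (eS_mem_circ θ), mul_assoc, mul_inv_cancel, mul_one]

lemma jS_conj (θ : ℝ) : jS * eS θ * jS⁻¹ = eS (-θ) := by
  apply Subtype.ext
  rw [Metric.unitSphere.coe_mul, Metric.unitSphere.coe_mul, inv_coe]
  ext <;> simp <;> ring

lemma zj_conj {z : S3} (hz : z ∈ circSet) (θ : ℝ) :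
    (z * jS) * eS θ * (z * jS)⁻¹ = eS (-θ) := by
  rw [mul_inv_rev]
  calc (z * jS) * eS θ * (jS⁻¹ * z⁻¹) = z * (jS * eS θ * jS⁻¹) * z⁻¹ := by group
  _ = z * eS (-θ) * z⁻¹ := by rw [jS_conj]
  _ = eS (-θ) := circ_conj hz _

lemma zj_inv {z : S3} (hz : z ∈ circSet) : (z * jS)⁻¹ = (-z) * jS := by
  rw [inv_eq_iff_mul_eq_one]
  apply Subtype.ext
  rw [Metric.unitSphere.coe_mul, Metric.unitSphere.coe_mul, Metric.unitSphere.coe_mul, Metric.unitSphere.coe_one]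
  have h := normSq_one z
  rw [hz.1, hz.2] at h
  show ((z:ℍ[ℝ]) * jS) * ((-(z:ℍ[ℝ])) * jS) = 1
  ext <;> simp [hz.1, hz.2] <;> nlinarith [h]

lemma neg_mem_circ {z : S3} (hz : z ∈ circSet) : -z ∈ circSet := by
  constructor
  · show ((-z : S3) : ℍ[ℝ]).imJ = 0
    have : ((-z : S3) : ℍ[ℝ]) = -(z : ℍ[ℝ]) := rfl
    rw [this]; simp [hz.1]
  · show ((-z : S3) : ℍ[ℝ]).imK = 0
    have : ((-z : S3) : ℍ[ℝ]) = -(z : ℍ[ℝ]) := rfl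
    rw [this]; simp [hz.2]

lemma inv_mem_circ {z : S3} (hz : z ∈ circSet) : z⁻¹ ∈ circSet := by
  constructor
  · show ((z⁻¹ : S3) : ℍ[ℝ]).imJ = 0
    rw [inv_coe]; simpa using hz.1
  · show ((z⁻¹ : S3) : ℍ[ℝ]).imK = 0
    rw [inv_coe]; simpa using hz.2

lemma O2_inv {g : S3} (hg : g ∈ O2Set) : g⁻¹ ∈ O2Set := by
  rcases hg with hg | ⟨z, hz, rfl⟩
  · exact Or.inl (inv_mem_circ hg)
  · exact Or.inr ⟨-z, neg_mem_circ hz, (zj_inv hz).symm⟩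

lemma zj_not_circ {z : S3} (hz : z ∈ circSet) : z * jS ∉ circSet := by
  intro h
  have h1 : ((z * jS : S3) : ℍ[ℝ]).imJ = 0 := h.1
  have h2 : ((z * jS : S3) : ℍ[ℝ]).imK = 0 := h.2
  rw [Metric.unitSphere.coe_mul] at h1 h2
  simp [hz.1, hz.2] at h1 h2
  have h := normSq_one z
  rw [hz.1, hz.2] at h
  nlinarith [h, h1, h2]

/-- The key geometric lemma. -/
lemma mem_O2_of_conj {g : S3} {θ : ℝ} (hθ : Real.sin θ ≠ 0)
    (h : g * eS θ * g⁻¹ ∈ circSet) : g ∈ O2Set := by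
  obtain ⟨h1, h2⟩ := h
  rw [Metric.unitSphere.coe_mul, Metric.unitSphere.coe_mul, inv_coe] at h1 h2
  set a := (g : ℍ[ℝ]).re with ha
  set b := (g : ℍ[ℝ]).imI with hb
  set c := (g : ℍ[ℝ]).imJ with hc
  set d := (g : ℍ[ℝ]).imK with hd
  have hn := normSq_one g
  rw [← ha, ← hb, ← hc, ← hd] at hn
  simp only [Quaternion.imJ_mul, Quaternion.imK_mul, Quaternion.re_mul, Quaternion.imI_mul,
    Quaternion.re_star, Quaternion.imI_star, Quaternion.imJ_star, Quaternion.imK_star,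
    eS_re, eS_imI, eS_imJ, eS_imK, ← ha, ← hb, ← hc, ← hd] at h1 h2
  -- extract the two bilinear conditions
  have e1 : b * c + a * d = 0 := by
    have : Real.sin θ * (2 * (b * c + a * d)) = 0 := by linear_combination h1
    rcases mul_eq_zero.mp this with h | h
    · exact absurd h hθ
    · linarith
  have e2 : b * d - a * c = 0 := by
    have : Real.sin θ * (2 * (b * d - a * c)) = 0 := by linear_combination h2
    rcases mul_eq_zero.mp this with h | h
    · exact absurd h hθ
    · linarith
  by_cases hab : a ^ 2 + b ^ 2 = 0
  · -- a = b = 0, so g ∈ S¹·j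
    have ha0 : a = 0 := by nlinarith
    have hb0 : b = 0 := by nlinarith
    have hcd : c ^ 2 + d ^ 2 = 1 := by nlinarith
    refine Or.inr ⟨mkS c d 0 0 (by nlinarith), ⟨rfl, rfl⟩, ?_⟩
    apply Subtype.ext
    rw [Metric.unitSphere.coe_mul]
    show (⟨c, d, 0, 0⟩ : ℍ[ℝ]) * (⟨0, 0, 1, 0⟩ : ℍ[ℝ]) = (g : ℍ[ℝ])
    ext <;> simp [mkS, ← ha, ← hb, ← hc, ← hd, ha0, hb0]
  · -- c = d = 0, so g ∈ S¹
    have hc0 : c = 0 := by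
      have : c * (a ^ 2 + b ^ 2) = 0 := by linear_combination b*e1 - a*e2
      rcases mul_eq_zero.mp this with h | h
      · exact h
      · exact absurd h hab
    have hd0 : d = 0 := by
      have : d * (a ^ 2 + b ^ 2) = 0 := by linear_combination a*e1 + b*e2
      rcases mul_eq_zero.mp this with h | h
      · exact h
      · exact absurd h hab
    exact Or.inl ⟨hc0, hd0⟩

/-- Explicit description of the group `(C_{2mr}/C_{2m}, C_{2nr}/C_{2n})_s`. -/
def Egrp (m n r : ℕ) (s : ℤ) : Subgroup (S3 × S3) where
  carrier := {p | ∃ u v : ℤ, (r:ℤ) ∣ (v - u * s) ∧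
    p.1 = eS (u * Real.pi / (m * r)) ∧ p.2 = eS (v * Real.pi / (n * r))}
  mul_mem' := by
    rintro p q ⟨u, v, hd, h1, h2⟩ ⟨u', v', hd', h1', h2'⟩
    refine ⟨u + u', v + v', ?_, ?_, ?_⟩
    · have : (v + v') - (u + u') * s = (v - u * s) + (v' - u' * s) := by ring
      rw [this]; exact dvd_add hd hd'
    · show p.1 * q.1 = _
      rw [h1, h1', eS_mul]; congr 1; push_cast; ring
    · show p.2 * q.2 = _
      rw [h2, h2', eS_mul]; congr 1; push_cast; ring
  one_mem' := ⟨0, 0, by simp, by simp [eS_zero.symm], by simp [eS_zero.symm]⟩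
  inv_mem' := by
    rintro p ⟨u, v, hd, h1, h2⟩
    refine ⟨-u, -v, ?_, ?_, ?_⟩
    · have : (-v) - (-u) * s = -(v - u * s) := by ring
      rw [this]; exact dvd_neg.2 hd
    · show p.1⁻¹ = _
      rw [h1, eS_inv]; congr 1; push_cast; ring
    · show p.2⁻¹ = _
      rw [h2, eS_inv]; congr 1; push_cast; ring

lemma closure_eq (m n r : ℕ) (s : ℤ) (hm : 1 ≤ m) (hn : 1 ≤ n) (hr : 2 < r) :
    (Subgroup.closure
        {((eS (Real.pi / (m * r)), eS ((s : ℝ) * Real.pi / (n * r))) : S3 × S3),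
          (eS (Real.pi / m), 1), (1, eS (Real.pi / n))} : Subgroup (S3 × S3))
      = Egrp m n r s := by
  have hm0 : (m : ℝ) ≠ 0 := Nat.cast_ne_zero.2 (by omega)
  have hn0 : (n : ℝ) ≠ 0 := Nat.cast_ne_zero.2 (by omega)
  have hr0 : (r : ℝ) ≠ 0 := Nat.cast_ne_zero.2 (by omega)
  apply le_antisymm
  · rw [Subgroup.closure_le]
    rintro p (rfl | rfl | rfl)
    · exact ⟨1, s, by simp, by norm_num, by norm_num⟩
    · refine ⟨r, 0, ⟨-s, by ring⟩, ?_, by simp [eS_zero.symm]⟩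
      show eS (Real.pi / m) = _
      congr 1; push_cast; field_simp
    · refine ⟨0, r, ⟨1, by ring⟩, by simp [eS_zero.symm], ?_⟩
      show eS (Real.pi / n) = _
      congr 1; push_cast; field_simp
  · rintro p ⟨u, v, ⟨t, ht⟩, h1, h2⟩
    have hv : v = u * s + r * t := by linarith [ht]
    have hp : p = (((eS (Real.pi / (m * r)), eS ((s : ℝ) * Real.pi / (n * r))) : S3 × S3)) ^ u
        * (((1, eS (Real.pi / n)) : S3 × S3)) ^ t := by
      have e1 : (p.1, p.2) = p := rfl
      rw [← e1, h1, h2]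
      apply Prod.ext
      · show _ = (eS (Real.pi / (m * r))) ^ u * (1 : S3) ^ t
        rw [one_zpow, mul_one, eS_zpow, mul_div_assoc]
      · show _ = (eS ((s:ℝ) * Real.pi / (n * r))) ^ u * (eS (Real.pi / n)) ^ t
        rw [eS_zpow, eS_zpow, eS_mul]
        have harg : (v:ℝ) * Real.pi/(n*r) = u * ((s:ℝ)*Real.pi/(n*r)) + t * (Real.pi/n) := by
          rw [hv]; push_cast; field_simp
        rw [harg]
    rw [hp]
    exact mul_mem (zpow_mem (Subgroup.subset_closure (by simp)) u)
      (zpow_mem (Subgroup.subset_closure (by simp)) t)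

lemma circ_inv_iff (g : S3) : g⁻¹ ∈ circSet ↔ g ∈ circSet :=
  ⟨fun h => by simpa using inv_mem_circ h, inv_mem_circ⟩

/-- Elements of the candidate normalizer set conjugate `Egrp` into itself. -/
lemma conj_mem (m n r : ℕ) (s : ℤ) {p : S3 × S3}
    (h1 : p.1 ∈ O2Set) (h2 : p.2 ∈ O2Set) (h3 : p.1 ∈ circSet ↔ p.2 ∈ circSet) :
    ∀ q ∈ Egrp m n r s, p * q * p⁻¹ ∈ Egrp m n r s := by
  rintro q ⟨u, v, hd, hq1, hq2⟩
  by_cases hc : p.1 ∈ circSet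
  · -- both components in the circle: conjugation fixes q
    have hc2 : p.2 ∈ circSet := h3.1 hc
    refine ⟨u, v, hd, ?_, ?_⟩
    · show p.1 * q.1 * p.1⁻¹ = _
      rw [hq1, circ_conj hc]
    · show p.2 * q.2 * p.2⁻¹ = _
      rw [hq2, circ_conj hc2]
  · -- both components in S¹·j: conjugation inverts q
    have hc2 : p.2 ∉ circSet := fun h => hc (h3.2 h)
    rcases h1 with h1 | ⟨z, hz, hz2⟩
    · exact absurd h1 hc
    rcases h2 with h2 | ⟨w, hw, hw2⟩
    · exact absurd h2 hc2
    refine ⟨-u, -v, by rw [show (-v) - (-u)*s = -(v - u*s) by ring]; exact dvd_neg.2 hd, ?_, ?_⟩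
    · show p.1 * q.1 * p.1⁻¹ = _
      rw [hq1, ← hz2, zj_conj hz]
      congr 1; push_cast; ring
    · show p.2 * q.2 * p.2⁻¹ = _
      rw [hq2, ← hw2, zj_conj hw]
      congr 1; push_cast; ring

lemma eS_arg_eq (a b : ℕ) (ha : 0 < a) (hb : 0 < b) {x y : ℤ}
    (h : eS ((x:ℝ) * Real.pi / (a * b)) = eS ((y:ℝ) * Real.pi / (a * b))) :
    (2 * a * b : ℤ) ∣ (x - y) := by
  rcases eS_inj h with ⟨k, hk⟩
  have ha0 : (a : ℝ) ≠ 0 := Nat.cast_ne_zero.2 (by omega)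
  have hb0 : (b : ℝ) ≠ 0 := Nat.cast_ne_zero.2 (by omega)
  field_simp at hk
  refine ⟨k, ?_⟩
  have h2 : ((x - y : ℤ) : ℝ) = ((2 * a * b * k : ℤ) : ℝ) := by
    refine mul_left_cancel₀ Real.pi_ne_zero ?_
    push_cast
    linear_combination Real.pi * hk
  exact_mod_cast h2

/-- The normalizer in `S³ × S³` of the group `(C_{2mr}/C_{2m}, C_{2nr}/C_{2n})_s`
(for `r > 2`, `gcd(s,r) = 1`) is exactly
`{(g,f) : g, f ∈ O(2)*, g ∈ S¹ ↔ f ∈ S¹}`. -/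
theorem normalizer_family_one (m n r : ℕ) (s : ℤ) (hm : 1 ≤ m) (hn : 1 ≤ n) (hr : 2 < r)
    (hs : Int.gcd s r = 1) :
    ((Subgroup.normalizer ((Subgroup.closure
        {((eS (Real.pi / (m * r)), eS ((s : ℝ) * Real.pi / (n * r))) : S3 × S3),
          (eS (Real.pi / m), 1), (1, eS (Real.pi / n))} : Subgroup (S3 × S3)) : Set (S3 × S3)))
        : Set (S3 × S3))
      = {p : S3 × S3 | p.1 ∈ O2Set ∧ p.2 ∈ O2Set ∧ (p.1 ∈ circSet ↔ p.2 ∈ circSet)} := by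
  have hm0 : (m : ℝ) ≠ 0 := Nat.cast_ne_zero.2 (by omega)
  have hn0 : (n : ℝ) ≠ 0 := Nat.cast_ne_zero.2 (by omega)
  have hr0 : (r : ℝ) ≠ 0 := Nat.cast_ne_zero.2 (by omega)
  have hrs : Int.gcd (r : ℤ) s = 1 := by rwa [Int.gcd_comm]
  rw [closure_eq m n r s hm hn hr]
  ext p
  simp only [SetLike.mem_coe, Set.mem_setOf_eq, Subgroup.mem_normalizer_iff]
  constructor
  · intro h
    -- the generator (e(π/(mr)), e(sπ/(nr))) belongs to Egrp
    have hgen : ((eS (Real.pi / (m * r)), eS ((s : ℝ) * Real.pi / (n * r))) : S3 × S3)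
        ∈ Egrp m n r s := ⟨1, s, by simp, by norm_num, by norm_num⟩
    obtain ⟨u, v, hd, h1, h2⟩ := (h _).1 hgen
    have h1' : p.1 * eS (Real.pi / (m * r)) * p.1⁻¹ = eS (u * Real.pi / (m * r)) := h1
    have h2' : p.2 * eS ((s:ℝ) * Real.pi / (n * r)) * p.2⁻¹ = eS (v * Real.pi / (n * r)) := h2
    -- sin of both angles is nonzero
    have hmr1 : (1:ℝ) < (m:ℝ) * r := by
      have : (3:ℝ) ≤ (m:ℝ) * r := by
        have : (3:ℕ) ≤ m * r := le_trans (by omega) (Nat.mul_le_mul hm (le_refl r))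
        exact_mod_cast this
      linarith
    have hsin1 : Real.sin (Real.pi / (m * r)) ≠ 0 := by
      apply ne_of_gt
      apply Real.sin_pos_of_pos_of_lt_pi
      · positivity
      · rw [div_lt_iff₀ (by linarith)]
        nlinarith [Real.pi_pos]
    have hsin2 : Real.sin ((s:ℝ) * Real.pi / (n * r)) ≠ 0 := by
      intro hcon
      rcases Real.sin_eq_zero_iff.1 hcon with ⟨k, hk⟩
      have : ((k * n * r : ℤ) : ℝ) = ((s : ℤ) : ℝ) := by
        push_cast
        refine mul_left_cancel₀ Real.pi_ne_zero ?_
        field_simp at hk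
        linear_combination Real.pi * hk
      have hrdvd : (r:ℤ) ∣ s := by
        have h' : s = k * (n:ℤ) * r := by exact_mod_cast this.symm
        exact ⟨k * n, by rw [h']; ring⟩
      have : (r:ℤ) ∣ (Int.gcd s r : ℤ) := by exact_mod_cast Int.dvd_gcd hrdvd dvd_rfl
      rw [hs] at this
      have : (r:ℤ) ≤ 1 := Int.le_of_dvd one_pos this
      omega
    have hgO2 : p.1 ∈ O2Set := mem_O2_of_conj hsin1 (by rw [h1']; exact eS_mem_circ _)
    have hfO2 : p.2 ∈ O2Set := mem_O2_of_conj hsin2 (by rw [h2']; exact eS_mem_circ _)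
    refine ⟨hgO2, hfO2, ?_⟩
    -- the matching condition: derive a contradiction from mixed types
    have key : ∀ (ε₁ ε₂ : ℤ), ε₁ = 1 ∨ ε₁ = -1 → ε₂ = 1 ∨ ε₂ = -1 →
        eS ((ε₁:ℝ) * (Real.pi / (m*r))) = eS (u * Real.pi / (m * r)) →
        eS ((ε₂:ℝ) * ((s:ℝ) * Real.pi / (n*r))) = eS (v * Real.pi / (n * r)) →
        ε₁ = ε₂ := by
      intro ε₁ ε₂ he1 he2 q1 q2
      by_contra hne
      -- then ε₂ = -ε₁, and we get r ∣ 2s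
      have hee : ε₂ = -ε₁ := by rcases he1 with rfl|rfl <;> rcases he2 with rfl|rfl <;> omega
      have q1' : eS ((ε₁:ℝ) * Real.pi / (m*r)) = eS ((u:ℝ) * Real.pi / (m * r)) := by
        rw [← q1]; congr 1; ring
      have q2' : eS (((ε₂*s : ℤ):ℝ) * Real.pi / (n*r)) = eS ((v:ℝ) * Real.pi / (n * r)) := by
        rw [← q2]; congr 1; push_cast; ring
      obtain ⟨k1, hk1⟩ := eS_arg_eq m r (by omega) (by omega) q1'
      obtain ⟨k2, hk2⟩ := eS_arg_eq n r (by omega) (by omega) q2'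
      obtain ⟨w, hw⟩ := hd
      push_cast at hk1 hk2
      -- ε₁ - u = 2mr k1, ε₂ s - v = 2nr k2, v - u s = r w
      have : 2 * (ε₁ * s) = (r:ℤ) * (2*m*k1*s - 2*n*k2 - w) := by
        rw [hee] at hk2
        linear_combination s * hk1 - hk2 - hw
      have hdvd2s : (r:ℤ) ∣ 2 * s := by
        rcases he1 with rfl | rfl
        · exact ⟨2*m*k1*s - 2*n*k2 - w, by linarith⟩
        · exact ⟨-(2*m*k1*s - 2*n*k2 - w), by linarith⟩
      have hdvd2 : (r:ℤ) ∣ 2 := by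
        exact Int.dvd_of_dvd_mul_left_of_gcd_one hdvd2s hrs
      have : (r:ℤ) ≤ 2 := Int.le_of_dvd (by norm_num) hdvd2
      omega
    constructor
    · intro hgc
      by_contra hfc
      rcases hfO2 with hf | ⟨w, hw, hw2⟩
      · exact hfc hf
      have c1 : eS ((1:ℝ) * (Real.pi / (m*r))) = eS (u * Real.pi / (m * r)) := by
        rw [← h1', circ_conj hgc]; congr 1; ring
      have c2 : eS ((-1:ℝ) * ((s:ℝ) * Real.pi / (n*r))) = eS (v * Real.pi / (n * r)) := by
        rw [← h2', ← hw2, zj_conj hw]; congr 1; ring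
      have := key 1 (-1) (Or.inl rfl) (Or.inr rfl) (by push_cast; exact c1) (by push_cast; exact c2)
      omega
    · intro hfc
      by_contra hgc
      rcases hgO2 with hg | ⟨w, hw, hw2⟩
      · exact hgc hg
      have c1 : eS ((-1:ℝ) * (Real.pi / (m*r))) = eS (u * Real.pi / (m * r)) := by
        rw [← h1', ← hw2, zj_conj hw]; congr 1; ring
      have c2 : eS ((1:ℝ) * ((s:ℝ) * Real.pi / (n*r))) = eS (v * Real.pi / (n * r)) := by
        rw [← h2', circ_conj hfc]; congr 1; ring
      have := key (-1) 1 (Or.inr rfl) (Or.inl rfl) (by push_cast; exact c1) (by push_cast; exact c2)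
      omega
  · rintro ⟨hg, hf, hiff⟩
    intro q
    constructor
    · intro hq
      exact conj_mem m n r s hg hf hiff q hq
    · intro hq
      have hinv1 : (p⁻¹).1 ∈ O2Set := O2_inv hg
      have hinv2 : (p⁻¹).2 ∈ O2Set := O2_inv hf
      have hinv3 : (p⁻¹).1 ∈ circSet ↔ (p⁻¹).2 ∈ circSet := by
        show p.1⁻¹ ∈ circSet ↔ p.2⁻¹ ∈ circSet
        rw [circ_inv_iff, circ_inv_iff]; exact hiff
      have := conj_mem m n r s hinv1 hinv2 hinv3 _ hq
      have heq : p⁻¹ * (p * q * p⁻¹) * p⁻¹⁻¹ = q := by group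
      rwa [heq] at this
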